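/- Let (α, T, N, B, κ, τ) be a spacelike Frenet curve (with spacelike principal normal) in E₁³ with κ(s) ≠ 0 and τ(s) ≠ 0 for all s and with 1/κ and 1/τ twice differentiable, and define U(s) = (1/κ(s))·T(s) − (1/τ(s))·B(s). If there is a function μ : ℝ → ℝ with U''(s) = μ(s)·N(s) for all s, then (1/κ)'' ≡ 0 and (1/τ)'' ≡ 0, so there exist constants a, b, c, d ∈ ℝ with 1/κ(s) = a·s + b and 1/τ(s) = c·s + d for all s; that is, α is a logarithmic spiral in E₁³. -/

import Mathlib

/-!
Since `T' = κN` and `B' = τN`, the normal components of `U'` cancel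
(`κ⁻¹·κ − τ⁻¹·τ = 0`), so `U' = (1/κ)'·T − (1/τ)'·B`, and differentiating once more,
`U'' = (1/κ)''·T − (1/τ)''·B + ((1/κ)'·κ − (1/τ)'·τ)·N`. Pairing `U'' = μN` with `T` and
with `B` in the Minkowski form kills the right-hand side and isolates `(1/κ)''` and `(1/τ)''`;
a function with vanishing second derivative is affine.
-/

/-- The Minkowski bilinear form on ℝ³: `⟨x,y⟩ = −x₀y₀ + x₁y₁ + x₂y₂`. -/
def mink (x y : Fin 3 → ℝ) : ℝ := -(x 0 * y 0) + x 1 * y 1 + x 2 * y 2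

section Minkowski

variable (x y z : Fin 3 → ℝ)

theorem mink_comm : mink x y = mink y x := by
  simp only [mink]; ring

@[simp]
theorem mink_add_left : mink (x + y) z = mink x z + mink y z := by
  simp only [mink, Pi.add_apply]; ring

@[simp]
theorem mink_sub_left : mink (x - y) z = mink x z - mink y z := by
  simp only [mink, Pi.sub_apply]; ring

@[simp]
theorem mink_smul_left (a : ℝ) : mink (a • x) y = a * mink x y := by
  simp only [mink, Pi.smul_apply, smul_eq_mul]; ring

end Minkowski

section Frame

variable {T N B : Fin 3 → ℝ}

theorem mink_frame_combination_tangent (a b c : ℝ) (hTT : mink T T = 1)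
    (hTN : mink T N = 0) (hTB : mink T B = 0) :
    mink (a • T - b • B + c • N) T = a := by
  simp [hTT, mink_comm N T, mink_comm B T, hTN, hTB]

theorem mink_frame_combination_binormal (a b c : ℝ) (hBB : mink B B = -1)
    (hTB : mink T B = 0) (hNB : mink N B = 0) :
    mink (a • T - b • B + c • N) B = b := by
  simp [hBB, hTB, hNB]

end Frame

theorem HasDerivAt.smul_tangent_sub_smul_binormal {T N B : ℝ → Fin 3 → ℝ} {κ τ f g : ℝ → ℝ}
    {f' g' s : ℝ} (hT : HasDerivAt T (κ s • N s) s) (hB : HasDerivAt B (τ s • N s) s)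
    (hf : HasDerivAt f f' s) (hg : HasDerivAt g g' s) :
    HasDerivAt (fun u => f u • T u - g u • B u)
      (f' • T s - g' • B s + (f s * κ s - g s * τ s) • N s) s := by
  refine ((hf.smul hT).sub (hg.smul hB)).congr_deriv ?_
  rw [smul_smul, smul_smul, sub_smul]
  abel

theorem eq_deriv_zero_mul_add_of_deriv_deriv_eq_zero {f : ℝ → ℝ} (hf : ContDiff ℝ 2 f)
    (h : ∀ s, deriv (deriv f) s = 0) (s : ℝ) : f s = deriv f 0 * s + f 0 := by
  have hconst (u : ℝ) : deriv f u = deriv f 0 :=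
    is_const_of_deriv_eq_zero hf.differentiable_deriv_two h u 0
  have hline (u : ℝ) : HasDerivAt (fun u => f u - deriv f 0 * u) 0 u := by
    refine ((hf.differentiable two_ne_zero u).hasDerivAt.sub
      ((hasDerivAt_id u).const_mul (deriv f 0))).congr_deriv ?_
    rw [hconst u, mul_one, sub_self]
  have := is_const_of_deriv_eq_zero (fun u => (hline u).differentiableAt)
    (fun u => (hline u).deriv) s 0
  simp only [mul_zero, sub_zero] at this
  linarith

theorem U_geodesic_implies_logarithmic_spiral_spacelike_general
    (T N B : ℝ → Fin 3 → ℝ) (κ τ : ℝ → ℝ)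
    (hT : ∀ s, HasDerivAt T (κ s • N s) s)
    (hB : ∀ s, HasDerivAt B (τ s • N s) s)
    (hTT : ∀ s, mink (T s) (T s) = 1)
    (hBB : ∀ s, mink (B s) (B s) = -1)
    (hTN : ∀ s, mink (T s) (N s) = 0)
    (hTB : ∀ s, mink (T s) (B s) = 0)
    (hNB : ∀ s, mink (N s) (B s) = 0)
    (hκ0 : ∀ s, κ s ≠ 0) (hτ0 : ∀ s, τ s ≠ 0)
    (hκinv : ContDiff ℝ 2 (fun s : ℝ => (κ s)⁻¹))
    (hτinv : ContDiff ℝ 2 (fun s : ℝ => (τ s)⁻¹))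
    (U : ℝ → Fin 3 → ℝ)
    (hU : ∀ s : ℝ, U s = (κ s)⁻¹ • T s - (τ s)⁻¹ • B s)
    (μ : ℝ → ℝ) (hμ : ∀ s : ℝ, deriv (deriv U) s = μ s • N s) :
    (∀ s : ℝ, deriv (deriv (fun u : ℝ => (κ u)⁻¹)) s = 0) ∧
    (∀ s : ℝ, deriv (deriv (fun u : ℝ => (τ u)⁻¹)) s = 0) ∧
      ∃ a b c d : ℝ, ∀ s : ℝ, (κ s)⁻¹ = a * s + b ∧ (τ s)⁻¹ = c * s + d := by
  set f : ℝ → ℝ := fun s => (κ s)⁻¹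
  set g : ℝ → ℝ := fun s => (τ s)⁻¹
  have hU' : deriv U = fun s => deriv f s • T s - deriv g s • B s := by
    rw [funext hU]
    funext s
    have := (hT s).smul_tangent_sub_smul_binormal (hB s)
      ((hκinv.differentiable two_ne_zero s).hasDerivAt)
      ((hτinv.differentiable two_ne_zero s).hasDerivAt)
    simpa [f, g, hκ0 s, hτ0 s] using this.deriv
  have hU'' (s : ℝ) : deriv (deriv U) s = deriv (deriv f) s • T s - deriv (deriv g) s • B s
      + (deriv f s * κ s - deriv g s * τ s) • N s := by
    rw [hU']
    exact ((hT s).smul_tangent_sub_smul_binormal (hB s)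
      (hκinv.differentiable_deriv_two s).hasDerivAt
      (hτinv.differentiable_deriv_two s).hasDerivAt).deriv
  have hf'' (s : ℝ) : deriv (deriv f) s = 0 := by
    have := congrArg (mink · (T s)) ((hU'' s).symm.trans (hμ s))
    simpa [mink_frame_combination_tangent _ _ _ (hTT s) (hTN s) (hTB s), mink_comm (N s),
      hTN s] using this
  have hg'' (s : ℝ) : deriv (deriv g) s = 0 := by
    have := congrArg (mink · (B s)) ((hU'' s).symm.trans (hμ s))
    simpa [mink_frame_combination_binormal _ _ _ (hBB s) (hTB s) (hNB s), hNB s] using this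
  exact ⟨hf'', hg'', deriv f 0, f 0, deriv g 0, g 0, fun s =>
    ⟨eq_deriv_zero_mul_add_of_deriv_deriv_eq_zero hκinv hf'' s,
      eq_deriv_zero_mul_add_of_deriv_deriv_eq_zero hτinv hg'' s⟩⟩

/-- For a spacelike Frenet curve (with spacelike principal normal)
`(α, T, N, B, κ, τ)` in `E₁³` with nonvanishing `κ, τ` and twice differentiable
radii `1/κ`, `1/τ`, if the second derivative of
`U(s) = (1/κ(s))·T(s) − (1/τ(s))·B(s)` is everywhere proportional to the normal
(`U'' = μ·N`), then `(1/κ)'' ≡ 0` and `(1/τ)'' ≡ 0`, so `1/κ` and `1/τ` are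
affine functions of arc length: `α` is a logarithmic spiral in `E₁³`. -/
theorem U_geodesic_implies_logarithmic_spiral_spacelike
    (α T N B : ℝ → Fin 3 → ℝ) (κ τ : ℝ → ℝ)
    (hα : ∀ s, HasDerivAt α (T s) s)
    (hT : ∀ s, HasDerivAt T (κ s • N s) s)
    (hN : ∀ s, HasDerivAt N (-κ s • T s + τ s • B s) s)
    (hB : ∀ s, HasDerivAt B (τ s • N s) s)
    (hTT : ∀ s, mink (T s) (T s) = 1)
    (hNN : ∀ s, mink (N s) (N s) = 1)
    (hBB : ∀ s, mink (B s) (B s) = -1)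
    (hTN : ∀ s, mink (T s) (N s) = 0)
    (hTB : ∀ s, mink (T s) (B s) = 0)
    (hNB : ∀ s, mink (N s) (B s) = 0)
    (hκ0 : ∀ s, κ s ≠ 0) (hτ0 : ∀ s, τ s ≠ 0)
    (hκinv : ContDiff ℝ 2 (fun s : ℝ => (κ s)⁻¹))
    (hτinv : ContDiff ℝ 2 (fun s : ℝ => (τ s)⁻¹))
    (U : ℝ → Fin 3 → ℝ)
    (hU : ∀ s : ℝ, U s = (κ s)⁻¹ • T s - (τ s)⁻¹ • B s)
    (μ : ℝ → ℝ) (hμ : ∀ s : ℝ, deriv (deriv U) s = μ s • N s) :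
    (∀ s : ℝ, deriv (deriv (fun u : ℝ => (κ u)⁻¹)) s = 0) ∧
    (∀ s : ℝ, deriv (deriv (fun u : ℝ => (τ u)⁻¹)) s = 0) ∧
      ∃ a b c d : ℝ, ∀ s : ℝ, (κ s)⁻¹ = a * s + b ∧ (τ s)⁻¹ = c * s + d :=
  U_geodesic_implies_logarithmic_spiral_spacelike_general T N B κ τ hT hB hTT hBB hTN hTB hNB hκ0
    hτ0 hκinv hτinv U hU μ hμ
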